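/- Let S be an unpunctured marked Riemann surface with triangulation T and A(S,T) the associated gentle Jacobian algebra. The number of indecomposable direct triangulated factors of the singularity category D_sg(A(S,T)) (equivalently, the cardinality of C(A(S,T))) equals the number of inner triangles of T, and every cycle in C(A(S,T)) has length three. -/

import Mathlib

/-- A combinatorial model of a triangulation `T` of an unpunctured marked Riemann
surface: a finite collection of triangles whose sides are internal arcs or boundary
segments; the three sides of a triangle are distinct, every internal arc is a side of at
least one and at most two triangles, and boundary segments lie on at most one triangle. -/
structure UnpuncturedTriangulation where
  /-- internal arcs -/
  Arc : Type
  /-- boundary segments -/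
  Bd : Type
  /-- triangles -/
  Tri : Type
  [fintypeArc : Fintype Arc]
  [fintypeBd : Fintype Bd]
  [fintypeTri : Fintype Tri]
  /-- the three sides of each triangle, in cyclic order -/
  sides : Tri → Fin 3 → Arc ⊕ Bd
  sides_inj : ∀ t : Tri, Function.Injective (sides t)
  arc_mem : ∀ a : Arc, ∃ (t : Tri) (i : Fin 3), sides t i = Sum.inl a
  arc_le_two : ∀ a : Arc, {x : Σ t : Tri, Fin 3 | sides x.1 x.2 = Sum.inl a}.ncard ≤ 2
  bd_le_one : ∀ b : Bd, {x : Σ t : Tri, Fin 3 | sides x.1 x.2 = Sum.inr b}.ncard ≤ 1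

attribute [instance] UnpuncturedTriangulation.fintypeArc UnpuncturedTriangulation.fintypeBd
  UnpuncturedTriangulation.fintypeTri

namespace UnpuncturedTriangulation

variable (T : UnpuncturedTriangulation)

/-- The arrows of the quiver of the gentle (Jacobian) algebra `A(S,T)` of
Assem–Brüstle–Charbonneau-Jodoin–Plamondon: one arrow for each pair of cyclically
consecutive sides of a triangle which are both internal arcs. -/
def ArrowT : Type :=
  {x : T.Tri × Fin 3 // (T.sides x.1 x.2).isLeft ∧ (T.sides x.1 (x.2 + 1)).isLeft}

/-- The relations of `A(S,T)`: two arrows compose to a relation exactly when they are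
cyclically consecutive arrows inside one and the same triangle. -/
def relT (a b : T.ArrowT) : Prop :=
  a.1.1 = b.1.1 ∧ b.1.2 = a.1.2 + 1

/-- A repetition-free cyclic path all of whose length-two subpaths are relations:
the cycles whose rotation classes form `C(A(S,T))`. -/
def IsCycleT (l : List T.ArrowT) : Prop :=
  l ≠ [] ∧ l.Nodup ∧
    ∀ i : Fin l.length, T.relT (l.get i) (l.get ⟨(i.1 + 1) % l.length, Nat.mod_lt _ i.pos⟩)

/-- The set `C(A(S,T))` of cycles up to cyclic rotation. -/
def CycClassT : Type :=
  Quot (fun l l' : {l : List T.ArrowT // T.IsCycleT l} => ∃ n, l'.1 = l.1.rotate n)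

/-- A triangle of `T` is an inner triangle if all three of its sides are internal arcs. -/
def IsInnerTriangle (t : T.Tri) : Prop :=
  ∀ i : Fin 3, (T.sides t i).isLeft

end UnpuncturedTriangulation

open Fin.CommRing

lemma fin3_natCast_mod (m : ℕ) : (((m + 1) % 3 : ℕ) : Fin 3) = (m : Fin 3) + 1 := by
  apply Fin.ext
  simp only [Fin.val_natCast, Fin.add_def, Fin.val_one]
  omega

namespace UnpuncturedTriangulation

variable (T : UnpuncturedTriangulation)

/-- The arrow of an inner triangle at position `j`. -/
def arr (t : T.Tri) (ht : T.IsInnerTriangle t) (j : Fin 3) : T.ArrowT :=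
  ⟨(t, j), ht j, ht (j + 1)⟩

/-- The canonical cycle of an inner triangle starting at position `j`. -/
def canonJ (t : T.Tri) (ht : T.IsInnerTriangle t) (j : Fin 3) : List T.ArrowT :=
  [T.arr t ht j, T.arr t ht (j + 1), T.arr t ht (j + 2)]

lemma cover3 : ∀ i j : Fin 3, i = j ∨ i = j + 1 ∨ i = j + 2 := by decide

lemma get_canonJ (t : T.Tri) (ht : T.IsInnerTriangle t) (j : Fin 3) (m : ℕ)
    (hm : m < (T.canonJ t ht j).length) :
    (T.canonJ t ht j).get ⟨m, hm⟩ = T.arr t ht (j + (m : Fin 3)) := by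
  have h3 : m < 3 := by
    have hc : (T.canonJ t ht j).length = 3 := rfl
    omega
  interval_cases m
  · exact congrArg (T.arr t ht) (by push_cast; ring)
  · exact congrArg (T.arr t ht) (by push_cast; ring)
  · exact congrArg (T.arr t ht) (by push_cast; ring)

lemma cycle_eq {l : List T.ArrowT} (h : T.IsCycleT l) :
    ∃ (t : T.Tri) (ht : T.IsInnerTriangle t) (j : Fin 3), l = T.canonJ t ht j := by
  obtain ⟨hne, hnd, hrel⟩ := h
  have hn : 0 < l.length := List.length_pos_iff.mpr hne
  set n := l.length with hnn
  set a0 := l.get ⟨0, hn⟩ with ha0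
  set t := a0.1.1 with hTt
  set j := a0.1.2 with hTj
  have hstep : ∀ k (hk : k < n),
      (l.get ⟨k, hk⟩).1.1 = t ∧ (l.get ⟨k, hk⟩).1.2 = j + (k : Fin 3) := by
    intro k
    induction k with
    | zero =>
      intro hk
      refine ⟨rfl, ?_⟩
      show j = j + ((0 : ℕ) : Fin 3)
      simp
    | succ m ih =>
      intro hk
      have hm : m < n := Nat.lt_of_succ_lt hk
      have hrm := hrel ⟨m, hm⟩
      have heq : (⟨(m + 1) % n, Nat.mod_lt _ (Fin.pos (⟨m, hm⟩ : Fin n))⟩ : Fin n)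
          = ⟨m + 1, hk⟩ := Fin.ext (Nat.mod_eq_of_lt hk)
      rw [heq] at hrm
      obtain ⟨h1, h2⟩ := hrm
      obtain ⟨ih1, ih2⟩ := ih hm
      refine ⟨by rw [← h1, ih1], ?_⟩
      rw [h2, ih2]
      push_cast
      ring
  -- the wrap-around relation forces 3 ∣ n
  have hn1 : n - 1 < n := by omega
  have hwrapidx : (⟨((n - 1) + 1) % n, Nat.mod_lt _ (Fin.pos (⟨n-1, hn1⟩ : Fin n))⟩ : Fin n)
      = ⟨0, hn⟩ := by
    apply Fin.ext
    show ((n - 1) + 1) % n = 0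
    have h' : n - 1 + 1 = n := by omega
    rw [h', Nat.mod_self]
  have hw := hrel ⟨n - 1, hn1⟩
  rw [hwrapidx] at hw
  have hw2 := hw.2
  rw [(hstep (n-1) hn1).2] at hw2
  have hj0 : (l.get ⟨0, hn⟩).1.2 = j := rfl
  rw [hj0, add_assoc] at hw2
  have hcast : ((n : ℕ) : Fin 3) = 0 := by
    have h' : ((n - 1 : ℕ) : Fin 3) + 1 = 0 := (left_eq_add.mp hw2)
    have hn' : (n - 1) + 1 = n := by omega
    rw [← hn']
    push_cast
    rw [h']
  have hdvd : n % 3 = 0 := by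
    have := congrArg Fin.val hcast
    simpa [Fin.val_natCast] using this
  -- nodup forces n ≤ 3
  have hle : n ≤ 3 := by
    by_contra hgt
    push_neg at hgt
    have h0 := hstep 0 hn
    have h3 := hstep 3 hgt
    have hc03 : ((0 : ℕ) : Fin 3) = ((3 : ℕ) : Fin 3) := by decide
    have heq3 : l.get ⟨0, hn⟩ = l.get ⟨3, hgt⟩ :=
      Subtype.ext (Prod.ext_iff.mpr ⟨h0.1.trans h3.1.symm,
        h0.2.trans ((congrArg (j + ·) hc03).trans h3.2.symm)⟩)
    have hidx := (List.Nodup.get_inj_iff hnd).mp heq3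
    have h03 : (0 : ℕ) = 3 := congrArg Fin.val hidx
    omega
  have hn3 : n = 3 := by omega
  -- the triangle is inner
  have h1lt : 1 < n := by omega
  have h1 := hstep 1 h1lt
  have hL0 : (T.sides t j).isLeft := a0.2.1
  have hL1 : (T.sides t (j + 1)).isLeft := a0.2.2
  have hL2 : (T.sides t (j + 2)).isLeft := by
    have hx := (l.get ⟨1, h1lt⟩).2.2
    have hc : j + ((1 : ℕ) : Fin 3) + 1 = j + 2 := by push_cast; ring
    have hside : T.sides (l.get ⟨1, h1lt⟩).1.1 ((l.get ⟨1, h1lt⟩).1.2 + 1)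
        = T.sides t (j + 2) := by rw [h1.1, h1.2, hc]
    rwa [hside] at hx
  have ht : T.IsInnerTriangle t := by
    intro i
    rcases cover3 i j with h | h | h <;> rw [h]
    · exact hL0
    · exact hL1
    · exact hL2
  refine ⟨t, ht, j, ?_⟩
  have hlen : l.length = (T.canonJ t ht j).length := by
    show n = 3
    exact hn3
  apply List.ext_get hlen
  intro k hk1 hk2
  rw [T.get_canonJ t ht j k hk2]
  exact Subtype.ext (Prod.ext_iff.mpr (hstep k hk1))

lemma canonJ_isCycle (t : T.Tri) (ht : T.IsInnerTriangle t) (j : Fin 3) :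
    T.IsCycleT (T.canonJ t ht j) := by
  have key : ∀ a b : Fin 3, a ≠ b → T.arr t ht a ≠ T.arr t ht b :=
    fun a b hab h => hab (congrArg (fun x => x.1.2) h)
  have hj1 : ∀ j : Fin 3, j ≠ j + 1 := by decide
  have hj2 : ∀ j : Fin 3, j ≠ j + 2 := by decide
  have hj12 : ∀ j : Fin 3, j + 1 ≠ j + 2 := by decide
  refine ⟨by simp [canonJ], ?_, ?_⟩
  · refine List.nodup_cons.mpr ⟨?_, List.nodup_cons.mpr ⟨?_, List.nodup_singleton _⟩⟩
    · intro hmem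
      rcases List.mem_cons.mp hmem with h | h
      · exact key _ _ (hj1 j) h
      · exact key _ _ (hj2 j) (List.mem_singleton.mp h)
    · intro hmem
      exact key _ _ (hj12 j) (List.mem_singleton.mp hmem)
  · rintro ⟨m, hm⟩
    simp only [T.get_canonJ]
    refine ⟨rfl, ?_⟩
    show j + (((m + 1) % (T.canonJ t ht j).length : ℕ) : Fin 3) = j + (m : Fin 3) + 1
    have hc : (T.canonJ t ht j).length = 3 := rfl
    rw [hc, fin3_natCast_mod, add_assoc]

lemma canonJ_rotate (t : T.Tri) (ht : T.IsInnerTriangle t) (j : Fin 3) :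
    T.canonJ t ht j = (T.canonJ t ht 0).rotate j.1 := by
  have e1 : (0 : Fin 3) + 1 = 1 := by decide
  have e2 : (0 : Fin 3) + 2 = 2 := by decide
  have e3 : (1 : Fin 3) + 1 = 2 := by decide
  have e4 : (1 : Fin 3) + 2 = 0 := by decide
  have e5 : (2 : Fin 3) + 1 = 0 := by decide
  have e6 : (2 : Fin 3) + 2 = 1 := by decide
  fin_cases j
  · simp [canonJ]
  · show T.canonJ t ht 1 = (T.canonJ t ht 0).rotate 1
    simp [canonJ, List.rotate_cons_succ, e1, e2, e3, e4]
  · show T.canonJ t ht 2 = (T.canonJ t ht 0).rotate 2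
    simp [canonJ, List.rotate_cons_succ, e1, e2, e5, e6]

lemma mem_canonJ_tri {t : T.Tri} {ht : T.IsInnerTriangle t} {j : Fin 3} {a : T.ArrowT}
    (h : a ∈ T.canonJ t ht j) : a.1.1 = t := by
  simp only [canonJ, List.mem_cons, List.mem_singleton, List.not_mem_nil, or_false] at h
  rcases h with h | h | h <;> rw [h] <;> rfl

/-- the triangle of the head of a cycle -/
def headTri (l : {l : List T.ArrowT // T.IsCycleT l}) : T.Tri :=
  (l.1.get ⟨0, List.length_pos_iff.mpr l.2.1⟩).1.1

lemma headTri_mem (l : {l : List T.ArrowT // T.IsCycleT l}) :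
    ∃ a ∈ l.1, a.1.1 = T.headTri l :=
  ⟨l.1.get ⟨0, List.length_pos_iff.mpr l.2.1⟩, List.get_mem _ _, rfl⟩

lemma headTri_spec (l : {l : List T.ArrowT // T.IsCycleT l}) :
    ∃ (ht : T.IsInnerTriangle (T.headTri l)) (j : Fin 3),
      l.1 = T.canonJ (T.headTri l) ht j := by
  obtain ⟨t, ht, j, hl⟩ := T.cycle_eq l.2
  have hhead : T.headTri l = t := by
    obtain ⟨a, ha, hat⟩ := T.headTri_mem l
    rw [hl] at ha
    rw [← hat]
    exact T.mem_canonJ_tri ha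
  subst hhead
  exact ⟨ht, j, hl⟩

lemma headTri_inner (l : {l : List T.ArrowT // T.IsCycleT l}) :
    T.IsInnerTriangle (T.headTri l) := (T.headTri_spec l).choose

end UnpuncturedTriangulation

/-- For a triangulation `T` of an unpunctured marked surface `S`, the
number of direct triangulated factors of the singularity category `D_sg(A(S,T))` —
equivalently, the cardinality of `C(A(S,T))` — equals the number of inner triangles of
`T`, and every cycle in `C(A(S,T))` has length three. -/
theorem cycles_eq_inner_triangles (T : UnpuncturedTriangulation) :
    Nonempty (T.CycClassT ≃ {t : T.Tri // T.IsInnerTriangle t}) ∧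
      ∀ l : List T.ArrowT, T.IsCycleT l → l.length = 3 := by
  constructor
  · -- build the equivalence
    have hinner : ∀ l : {l : List T.ArrowT // T.IsCycleT l}, T.IsInnerTriangle (T.headTri l) :=
      T.headTri_inner
    refine ⟨{
      toFun := Quot.lift (fun l => (⟨T.headTri l, hinner l⟩ : {t : T.Tri // T.IsInnerTriangle t}))
        ?_
      invFun := fun t => Quot.mk _ ⟨T.canonJ t.1 t.2 0, T.canonJ_isCycle t.1 t.2 0⟩
      left_inv := ?_
      right_inv := ?_ }⟩
    · rintro a b ⟨m, hr⟩
      refine Subtype.ext ?_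
      show T.headTri a = T.headTri b
      obtain ⟨ht, j, hl⟩ := T.headTri_spec a
      obtain ⟨y, hy, hyt⟩ := T.headTri_mem b
      rw [hr, hl] at hy
      have hyt' : y.1.1 = T.headTri a := T.mem_canonJ_tri (List.mem_rotate.mp hy)
      rw [← hyt, hyt']
    · intro q
      induction q using Quot.ind with
      | _ l =>
        show Quot.mk _ _ = Quot.mk _ l
        obtain ⟨ht, j, hl⟩ := T.headTri_spec l
        apply Quot.sound
        exact ⟨j.1, by rw [hl, T.canonJ_rotate]⟩
    · rintro ⟨t, ht⟩
      refine Subtype.ext ?_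
      show T.headTri ⟨T.canonJ t ht 0, T.canonJ_isCycle t ht 0⟩ = t
      exact T.mem_canonJ_tri (List.get_mem _ _)
  · intro l hl
    obtain ⟨t, ht, j, rfl⟩ := T.cycle_eq hl
    rfl
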